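/- Over a field K of characteristic p > 0, for every A ∈ K⟨⟨X₁,...,X_k⟩⟩ with constant coefficient α₀, the p-fold shuffle power A^{⧢p} equals the constant α₀^p; in particular every coefficient of A^{⧢p} at a monomial of positive degree vanishes. -/

import Mathlib

/-- A non-commutative formal power series in `k` variables over `K`: a coefficient
function on words (monomials) in the free monoid on `k` letters. -/
def NCSeries (k : ℕ) (K : Type*) := List (Fin k) → K

instance (k : ℕ) (K : Type*) [Field K] : AddCommGroup (NCSeries k K) :=
  Pi.addCommGroup

noncomputable instance (k : ℕ) (K : Type*) [Field K] : Module K (NCSeries k K) :=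
  Pi.module _ _ _

/-- The shuffle product of two non-commutative series: the coefficient on a word `W`
is the sum, over all ways of colouring the letters of `W` with two colours, of the
product of the coefficient of `A` on the first-colour subword with the coefficient of
`B` on the second-colour subword. -/
noncomputable def ncShuffle {k : ℕ} {K : Type*} [Field K] (A B : NCSeries k K) :
    NCSeries k K := fun W =>
  ∑ S : Finset (Fin W.length),
    A (((List.finRange W.length).filter (fun i => i ∈ S)).map W.get) *
    B (((List.finRange W.length).filter (fun i => i ∉ S)).map W.get)

/-- The constant series `c·1`. -/
noncomputable def ncConst {k : ℕ} {K : Type*} [Field K] (c : K) : NCSeries k K :=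
  fun W => if W = [] then c else 0

/-- `A^{⧢n}`, the `n`-fold shuffle power. -/
noncomputable def ncShufflePow {k : ℕ} {K : Type*} [Field K] (A : NCSeries k K) :
    ℕ → NCSeries k K
  | 0 => ncConst 1
  | n + 1 => ncShuffle A (ncShufflePow A n)

section Aux
variable {k : ℕ} {K : Type*} [Field K]

/-- Subword selected by a boolean mask. -/
def ncSubw (W : List (Fin k)) (f : Fin W.length → Bool) : List (Fin k) :=
  ((List.finRange W.length).filter (fun i => f i)).map W.get

/-- The Finset/Bool-function equivalence. -/
def finsetBoolEquiv (n : ℕ) : Finset (Fin n) ≃ (Fin n → Bool) where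
  toFun S := fun i => decide (i ∈ S)
  invFun f := Finset.univ.filter (fun i => f i = true)
  left_inv S := by ext i; simp
  right_inv f := by ext i; simp

lemma ncShuffle_eq_sum_fun (A B : NCSeries k K) (W : List (Fin k)) :
    ncShuffle A B W = ∑ f : Fin W.length → Bool,
      A (ncSubw W f) * B (ncSubw W (fun i => !f i)) := by
  refine Fintype.sum_equiv (finsetBoolEquiv W.length) _ _ (fun S => ?_)
  unfold ncSubw finsetBoolEquiv
  simp [decide_not]

lemma ncSubw_cons_aux (x : Fin k) (W : List (Fin k)) (f : Fin (W.length + 1) → Bool) :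
    ((List.finRange (W.length + 1)).filter (fun i => f i)).map (x :: W).get =
      (if f 0 then [x] else []) ++
        ((List.finRange W.length).filter (fun i => f i.succ)).map W.get := by
  conv_lhs => rw [show List.finRange (W.length + 1) =
    (0 : Fin (W.length + 1)) :: (List.finRange W.length).map Fin.succ from
      List.finRange_succ (n := W.length)]
  by_cases h : f 0 = true
  · simp only [List.filter_cons, h, if_true, List.filter_map, List.map_cons, List.map_map]
    rfl
  · simp only [Bool.not_eq_true] at h
    simp only [List.filter_cons, h, Bool.false_eq_true, if_false, List.filter_map,
      List.map_map, List.nil_append]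
    rfl

lemma ncSubw_cons (x : Fin k) (W : List (Fin k)) (f : Fin (W.length + 1) → Bool) :
    ncSubw (x :: W) f =
      (if f 0 then [x] else []) ++ ncSubw W (fun i => f i.succ) :=
  ncSubw_cons_aux x W f

lemma ncShuffle_cons (A B : NCSeries k K) (x : Fin k) (W : List (Fin k)) :
    ncShuffle A B (x :: W) =
      ncShuffle (fun W' => A (x :: W')) B W + ncShuffle A (fun W' => B (x :: W')) W := by
  rw [ncShuffle_eq_sum_fun A B (x :: W), ncShuffle_eq_sum_fun (fun W' => A (x :: W')) B W,
    ncShuffle_eq_sum_fun A (fun W' => B (x :: W')) W]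
  set e := Fin.consEquiv fun _ : Fin (W.length + 1) => Bool with he
  have key := Fintype.sum_equiv e
    (fun bg : Bool × (Fin W.length → Bool) =>
      A (ncSubw (x :: W) (e bg)) * B (ncSubw (x :: W) (fun i => !(e bg i))))
    (fun f => A (ncSubw (x :: W) f) * B (ncSubw (x :: W) fun i => !f i))
    (fun bg => rfl)
  rw [show (∑ f : Fin (x :: W).length → Bool,
      A (ncSubw (x :: W) f) * B (ncSubw (x :: W) fun i => !f i)) =
      ∑ f : Fin (W.length + 1) → Bool,
      A (ncSubw (x :: W) f) * B (ncSubw (x :: W) fun i => !f i) from rfl, ← key,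
    Fintype.sum_prod_type, Fintype.sum_bool]
  congr 1 <;> refine Finset.sum_congr rfl (fun g _ => ?_) <;>
    rw [ncSubw_cons, ncSubw_cons] <;>
    simp [he, Fin.consEquiv, Fin.cons_zero, Fin.cons_succ]

lemma ncShuffle_nil (A B : NCSeries k K) : ncShuffle A B [] = A [] * B [] := by
  rw [ncShuffle_eq_sum_fun]
  simp [ncSubw]

lemma ncShuffle_add_left (A₁ A₂ B : NCSeries k K) (W : List (Fin k)) :
    ncShuffle (fun w => A₁ w + A₂ w) B W = ncShuffle A₁ B W + ncShuffle A₂ B W := by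
  simp [ncShuffle, add_mul, Finset.sum_add_distrib]

lemma ncShuffle_add_right (A B₁ B₂ : NCSeries k K) (W : List (Fin k)) :
    ncShuffle A (fun w => B₁ w + B₂ w) W = ncShuffle A B₁ W + ncShuffle A B₂ W := by
  simp [ncShuffle, mul_add, Finset.sum_add_distrib]

lemma ncShuffle_zero_right (A : NCSeries k K) (W : List (Fin k)) :
    ncShuffle A (fun _ => (0 : K)) W = 0 := by
  simp [ncShuffle]

lemma ncShuffle_nsmul_right (A B : NCSeries k K) (n : ℕ) (W : List (Fin k)) :
    ncShuffle A (fun w => n • B w) W = n • ncShuffle A B W := by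
  simp [ncShuffle, Finset.smul_sum, mul_smul_comm, mul_left_comm]

lemma ncShuffle_comm : ∀ (W : List (Fin k)) (A B : NCSeries k K),
    ncShuffle A B W = ncShuffle B A W
  | [], A, B => by rw [ncShuffle_nil, ncShuffle_nil, mul_comm]
  | x :: W, A, B => by
    rw [ncShuffle_cons, ncShuffle_cons, ncShuffle_comm W (fun W' => A (x :: W')) B,
      ncShuffle_comm W A (fun W' => B (x :: W')), add_comm]

lemma ncShuffle_assoc : ∀ (W : List (Fin k)) (A B C : NCSeries k K),
    ncShuffle (ncShuffle A B) C W = ncShuffle A (ncShuffle B C) W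
  | [], A, B, C => by
    rw [ncShuffle_nil, ncShuffle_nil, ncShuffle_nil, ncShuffle_nil, mul_assoc]
  | x :: W, A, B, C => by
    rw [ncShuffle_cons, ncShuffle_cons]
    rw [show (fun W' => ncShuffle A B (x :: W')) =
        (fun W' => ncShuffle (fun w => A (x :: w)) B W' +
          ncShuffle A (fun w => B (x :: w)) W') from
      funext fun W' => ncShuffle_cons A B x W']
    rw [show (fun W' => ncShuffle B C (x :: W')) =
        (fun W' => ncShuffle (fun w => B (x :: w)) C W' +
          ncShuffle B (fun w => C (x :: w)) W') from
      funext fun W' => ncShuffle_cons B C x W']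
    rw [ncShuffle_add_left, ncShuffle_add_right,
      ncShuffle_assoc W (fun w => A (x :: w)) B C, ncShuffle_assoc W A (fun w => B (x :: w)) C,
      ncShuffle_assoc W A B (fun W' => C (x :: W'))]
    abel

lemma ncShuffle_left_comm (W : List (Fin k)) (A B C : NCSeries k K) :
    ncShuffle A (ncShuffle B C) W = ncShuffle B (ncShuffle A C) W := by
  rw [← ncShuffle_assoc, ← ncShuffle_assoc,
    show ncShuffle A B = ncShuffle B A from funext fun w => ncShuffle_comm w A B]

lemma ncConst_cons (c : K) (x : Fin k) (W : List (Fin k)) :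
    ncConst c (x :: W) = 0 := by simp [ncConst]

lemma ncShufflePow_nil (A : NCSeries k K) : ∀ n, ncShufflePow A n [] = A [] ^ n
  | 0 => by simp [ncShufflePow, ncConst]
  | n + 1 => by
    show ncShuffle A (ncShufflePow A n) [] = _
    rw [ncShuffle_nil, ncShufflePow_nil A n, ← pow_succ']

lemma ncShufflePow_cons (A : NCSeries k K) (x : Fin k) :
    ∀ (n : ℕ) (W : List (Fin k)), ncShufflePow A (n + 1) (x :: W) =
      (n + 1) • ncShuffle (fun w => A (x :: w)) (ncShufflePow A n) W
  | 0, W => by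
    show ncShuffle A (ncShufflePow A 0) (x :: W) = _
    rw [ncShuffle_cons,
      show (fun W' => ncShufflePow A 0 (x :: W')) = (fun _ => (0 : K)) from
        funext fun w => ncConst_cons 1 x w,
      ncShuffle_zero_right, add_zero, zero_add, one_smul]
  | n + 1, W => by
    show ncShuffle A (ncShufflePow A (n + 1)) (x :: W) = _
    rw [ncShuffle_cons,
      show (fun W' => ncShufflePow A (n + 1) (x :: W')) =
        (fun W' => (n + 1) • ncShuffle (fun w => A (x :: w)) (ncShufflePow A n) W') from
      funext fun W' => ncShufflePow_cons A x n W',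
      ncShuffle_nsmul_right, ncShuffle_left_comm W A (fun w => A (x :: w)) (ncShufflePow A n)]
    show ncShuffle (fun w => A (x :: w)) (ncShufflePow A (n + 1)) W + (n + 1) •
      ncShuffle (fun w => A (x :: w)) (ncShufflePow A (n + 1)) W = _
    conv_rhs => rw [succ_nsmul]
    exact add_comm _ _

end Aux

/-- Over a field of characteristic `p > 0`, the `p`-fold shuffle power of any
non-commutative formal power series `A` equals the constant `α₀^p`; in particular all
its coefficients in positive degree vanish. -/
theorem ncShufflePow_char_p {k : ℕ} {K : Type*} [Field K] (p : ℕ) (hp : p.Prime)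
    [CharP K p] (A : NCSeries k K) :
    ncShufflePow A p = ncConst ((A []) ^ p) := by
  funext W
  cases W with
  | nil => rw [ncShufflePow_nil]; simp [ncConst]
  | cons x W =>
    obtain ⟨q, rfl⟩ : ∃ q, p = q + 1 := ⟨p - 1, (Nat.succ_pred_eq_of_pos hp.pos).symm⟩
    rw [ncShufflePow_cons, nsmul_eq_mul, show (((q : ℕ) + 1 : ℕ) : K) = 0 from
      CharP.cast_eq_zero K (q + 1), zero_mul, ncConst_cons]
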